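/- Let N be a homogeneous Poisson process with parameter λ and X_t := N_t − λt. Then for every natural number N ≥ 1 and t ≥ 0, X_t^N = Σ_{i=1}^{N} C(N,i) ∫₀ᵗ X_{s−}^{N−i} dX_s + λ Σ_{i=2}^{N} C(N,i) ∫₀ᵗ X_{s−}^{N−i} ds almost surely. -/

import Mathlib

open MeasureTheory ProbabilityTheory Filter
open scoped ENNReal NNReal

/-- A homogeneous Poisson process with parameter `λ`: an `ℕ`-valued counting process
starting at `0`, with nondecreasing right-continuous paths of unit jumps,
independent increments, and `N_t − N_s ∼ Poisson(λ(t−s))`. -/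
structure IsPoissonProcess {Ω : Type*} [MeasurableSpace Ω] (P : Measure Ω)
    (Np : ℝ → Ω → ℕ) (lam : ℝ≥0) : Prop where
  measurable : ∀ t, Measurable (Np t)
  start : ∀ ω, ∀ t : ℝ, t ≤ 0 → Np t ω = 0
  mono : ∀ ω, ∀ s t : ℝ, s ≤ t → Np s ω ≤ Np t ω
  right_cont : ∀ ω, ∀ t : ℝ,
    Tendsto (fun u => (Np u ω : ℝ)) (nhdsWithin t (Set.Ioi t)) (nhds (Np t ω))
  unit_jumps : ∀ ω, ∀ t : ℝ,
    (Np t ω : ℝ) - Function.leftLim (fun u => (Np u ω : ℝ)) t ≤ 1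
  indep_incr : ∀ n : ℕ, ∀ t : Fin (n + 1) → ℝ, Monotone t →
    iIndepFun
      (fun i : Fin n => fun ω => Np (t i.succ) ω - Np (t i.castSucc) ω) P
  poisson_incr : ∀ s t : ℝ, 0 ≤ s → s ≤ t →
    Measure.map (fun ω => Np t ω - Np s ω) P =
      (poissonPMF (Real.toNNReal (t - s) * lam)).toMeasure

/-!
Pathwise, `X` is a counting path `n` with jumps of size at most one plus the drift `-λ t`. On a
stretch where `n` is constant, `X` is affine and the fundamental theorem of calculus gives
`F(X_b) - F(X_a) = -λ ∫ₐᵇ F'(X_s) ds`; at a jump time the increment of `F ∘ X` is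
`F(X_s) - F(X_{s-})`. Splitting `(a, b]` at its first jump time and inducting on the number of
jumps yields the pathwise Itô formula
`F(X_t) - F(X_0) = Σ_{0<s≤t} (F(X_s) - F(X_{s-})) - λ ∫₀ᵗ F'(X_s) ds`.
For `F(y) = y^N` a unit jump contributes `(y + 1)^N - y^N = Σ_{i≥1} C(N,i) y^{N-i}`; the second
sum of the statement cancels the compensators with `i ≥ 2`, leaving the Itô drift term
`-λ N ∫₀ᵗ X_s^{N-1} ds`. Since `X_s = X_{s-}` off the finitely many jump times, the integrals may
be taken against `X_{s-}`.
-/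

open Set Function Topology

variable {F F' : ℝ → ℝ}

theorem intervalIntegrable_comp_sub_mul {g G : ℝ → ℝ} (hg : Monotone g) (hG : Continuous G)
    (c a b : ℝ) : IntervalIntegrable (fun s => G (g s - c * s)) volume a b := by
  wlog hab : a ≤ b generalizing a b
  · exact (this b a (le_of_not_ge hab)).symm
  set r := |c| * max |a| |b|
  obtain ⟨M, hM⟩ := (isCompact_Icc (a := g a - r) (b := g b + r)).exists_bound_of_continuousOn
    hG.continuousOn
  rw [intervalIntegrable_iff_integrableOn_Icc_of_le hab]
  refine Measure.integrableOn_of_bounded measure_Icc_lt_top.ne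
    (hG.measurable.comp
      (hg.measurable.sub (measurable_const.mul measurable_id))).aestronglyMeasurable
    (ae_restrict_of_forall_mem measurableSet_Icc fun s hs => hM _ ?_)
  have hcs : |c * s| ≤ r := by
    rw [abs_mul]
    exact mul_le_mul_of_nonneg_left (abs_le_max_abs_abs hs.1 hs.2) (abs_nonneg c)
  have := abs_le.1 hcs
  exact ⟨by linarith [hg hs.1], by linarith [hg hs.2]⟩

theorem sub_eq_neg_mul_integral_deriv_comp (hF : ∀ y, HasDerivAt F (F' y) y)
    (hF' : Continuous F') (k c a b : ℝ) :
    F (k - c * b) - F (k - c * a) = -c * ∫ s in a..b, F' (k - c * s) := by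
  have hderiv : ∀ s ∈ uIcc a b, HasDerivAt (fun u => F (k - c * u)) (F' (k - c * s) * -c) s :=
    fun s _ => by
      have := (hF (k - c * s)).comp s (((hasDerivAt_id' s).const_mul c).const_sub k)
      rwa [mul_one] at this
  have hftc := intervalIntegral.integral_eq_sub_of_hasDerivAt hderiv
    ((by fun_prop : Continuous fun s => F' (k - c * s) * -c).intervalIntegrable a b)
  rw [intervalIntegral.integral_mul_const] at hftc
  linear_combination -hftc

theorem add_pow_sub_pow_of_le_one {R : Type*} [CommRing R] (y : R) {d : ℕ} (hd : d ≤ 1) (N : ℕ) :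
    (y + d) ^ N - y ^ N = d * ∑ i ∈ Finset.Icc 1 N, (N.choose i : R) * y ^ (N - i) := by
  interval_cases d
  · simp
  · rw [Nat.cast_one, one_mul, add_comm y 1, add_pow, Finset.range_eq_Ico,
      Finset.sum_eq_sum_Ico_succ_bot N.succ_pos]
    simp [mul_comm, Finset.Ico_add_one_right_eq_Icc]

theorem sum_choose_mul_sub_add_sum_choose_mul {R : Type*} [CommRing R] {N : ℕ} (hN : 1 ≤ N)
    (A B : ℕ → R) (c : R) :
    ∑ i ∈ Finset.Icc 1 N, (N.choose i : R) * (A i - c * B i) +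
        c * ∑ i ∈ Finset.Icc 2 N, (N.choose i : R) * B i =
      ∑ i ∈ Finset.Icc 1 N, (N.choose i : R) * A i - c * N * B 1 := by
  rw [← Finset.add_sum_Ioc_eq_sum_Icc hN, ← Finset.add_sum_Ioc_eq_sum_Icc hN,
    Nat.choose_one_right]
  change _ + ∑ i ∈ Finset.Icc 2 N, _ + _ = _ + ∑ i ∈ Finset.Icc 2 N, _ - _
  simp only [mul_sub, Finset.sum_sub_distrib, Finset.mul_sum, mul_left_comm c]
  ring

section CountingPath

variable {n : ℝ → ℕ}

theorem Monotone.tendsto_leftLim_natCast_sub_mul (hn : Monotone n) (c s : ℝ) :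
    Tendsto (fun u => (n u : ℝ) - c * u) (𝓝[<] s) (𝓝 (((leftLim n s : ℕ) : ℝ) - c * s)) :=
  ((continuous_of_discreteTopology.tendsto _).comp (hn.tendsto_leftLim s)).sub
    (((continuous_const.mul continuous_id).tendsto s).mono_left nhdsWithin_le_nhds)

theorem Monotone.leftLim_natCast_sub_mul (hn : Monotone n) (c s : ℝ) :
    leftLim (fun u => (n u : ℝ) - c * u) s = (leftLim n s : ℕ) - c * s :=
  leftLim_eq_of_tendsto (hn.tendsto_leftLim_natCast_sub_mul c s)

theorem Monotone.finite_setOf_leftLim_lt (hn : Monotone n) (a b : ℝ) :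
    {s ∈ Ioc a b | leftLim n s < n s}.Finite := by
  have hstrict : StrictMonoOn n {s ∈ Ioc a b | leftLim n s < n s} :=
    fun _ _ _ hs' hlt => (hn.le_leftLim hlt).trans_lt hs'.2
  refine Set.Finite.of_finite_image ((finite_Icc (n a) (n b)).subset ?_) hstrict.injOn
  rintro _ ⟨s, ⟨hs, -⟩, rfl⟩
  exact ⟨hn hs.1.le, hn hs.2⟩

theorem Monotone.summable_jump_mul (hn : Monotone n) (g : ℝ → ℝ) (a b : ℝ) :
    Summable fun s : Ioc a b => ((n s : ℝ) - (leftLim n s : ℕ)) * g s := by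
  refine summable_of_hasFiniteSupport <|
    ((hn.finite_setOf_leftLim_lt a b).preimage Subtype.val_injective.injOn).subset ?_
  intro s hs
  refine ⟨s.2, (hn.leftLim_le le_rfl).lt_of_ne fun h => hs ?_⟩
  simp [h]

theorem Monotone.integral_comp_leftLim (hn : Monotone n) (G : ℝ → ℝ) (c : ℝ) {a b : ℝ}
    (hab : a ≤ b) :
    ∫ s in a..b, G ((leftLim n s : ℕ) - c * s) = ∫ s in a..b, G (n s - c * s) := by
  refine intervalIntegral.integral_congr_ae ?_
  filter_upwards [(hn.finite_setOf_leftLim_lt a b).countable.ae_notMem volume] with s hs hsab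
  rw [uIoc_of_le hab] at hsab
  rw [le_antisymm (hn.leftLim_le le_rfl) (not_lt.1 fun h => hs ⟨hsab, h⟩)]

theorem exists_first_jump (hn : Monotone n) (hrc : ∀ s, ContinuousWithinAt n (Ioi s) s)
    {a b : ℝ} (hab : n a < n b) :
    ∃ τ ∈ Ioc a b, n a < n τ ∧ ∀ s ∈ Ico a τ, n s = n a := by
  set S := {s | n a < n s}
  have hbdd : BddBelow S := ⟨a, fun s hs => (hn.reflect_lt hs).le⟩
  -- `n` is constant just to the right of `sInf S`, and already exceeds `n a` there.
  have hmem : sInf S ∈ S := by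
    by_contra hnot
    have hflat : ∀ᶠ u in 𝓝[>] sInf S, n u = n (sInf S) := by
      have := hrc (sInf S)
      rwa [ContinuousWithinAt, nhds_discrete, tendsto_pure] at this
    have hin : ∀ᶠ u in 𝓝[>] sInf S, u ∈ S := by
      filter_upwards [self_mem_nhdsWithin] with u hu
      obtain ⟨s, hs, hsu⟩ := exists_lt_of_csInf_lt ⟨b, hab⟩ hu
      exact hs.trans_le (hn hsu.le)
    obtain ⟨u, hu, huS⟩ := (hflat.and hin).exists
    exact hnot (show n a < n (sInf S) from hu ▸ huS)
  refine ⟨sInf S, ⟨hn.reflect_lt hmem, csInf_le hbdd hab⟩, hmem, fun s hs => ?_⟩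
  exact le_antisymm (not_lt.1 (notMem_of_lt_csInf (s := S) hs.2 hbdd)) (hn hs.1)

theorem hasSum_indicator_jumps_of_flat (hF : ∀ y, HasDerivAt F (F' y) y) (hF' : Continuous F')
    (c : ℝ) {a τ : ℝ} (haτ : a ≤ τ) (hflat : ∀ s ∈ Ico a τ, n s = n a) :
    HasSum ((Ioc a τ).indicator fun s => F (n s - c * s) - F ((leftLim n s : ℕ) - c * s))
      (F (n τ - c * τ) - F (n a - c * a) + c * ∫ s in a..τ, F' (n s - c * s)) := by
  rcases haτ.eq_or_lt with rfl | hlt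
  · simp [hasSum_zero]
  have hleft : ∀ s ∈ Ioc a τ, leftLim n s = n a := fun s hs =>
    leftLim_eq_of_tendsto <| tendsto_const_nhds.congr' <|
      eventually_of_mem (Ioo_mem_nhdsLT hs.1) fun u hu =>
        (hflat u ⟨hu.1.le, hu.2.trans_le hs.2⟩).symm
  have hsingle : ((Ioc a τ).indicator fun s => F (n s - c * s) - F ((leftLim n s : ℕ) - c * s)) =
      Pi.single τ (F (n τ - c * τ) - F (n a - c * τ)) := by
    ext s
    by_cases hsτ : s = τ
    · subst hsτ
      simp [hleft s ⟨hlt, le_rfl⟩, hlt]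
    · rw [Pi.single_apply, if_neg hsτ]
      by_cases hs : s ∈ Ioc a τ
      · rw [indicator_of_mem hs, hleft s hs, hflat s ⟨hs.1.le, lt_of_le_of_ne hs.2 hsτ⟩, sub_self]
      · exact indicator_of_notMem hs _
  have hint : ∫ s in a..τ, F' (n s - c * s) = ∫ s in a..τ, F' (n a - c * s) := by
    refine intervalIntegral.integral_congr_ae ?_
    filter_upwards [Measure.ae_ne volume τ] with s hsτ hs
    rw [uIoc_of_le haτ] at hs
    rw [hflat s ⟨hs.1.le, lt_of_le_of_ne hs.2 hsτ⟩]
  rw [hsingle, hint]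
  convert hasSum_pi_single τ _ using 1
  linear_combination sub_eq_neg_mul_integral_deriv_comp hF hF' (n a) c a τ

theorem hasSum_indicator_jumps (hn : Monotone n) (hrc : ∀ s, ContinuousWithinAt n (Ioi s) s)
    (hF : ∀ y, HasDerivAt F (F' y) y) (hF' : Continuous F') (c : ℝ) {a b : ℝ} (hab : a ≤ b) :
    HasSum ((Ioc a b).indicator fun s => F (n s - c * s) - F ((leftLim n s : ℕ) - c * s))
      (F (n b - c * b) - F (n a - c * a) + c * ∫ s in a..b, F' (n s - c * s)) := by
  induction hk : n b - n a using Nat.strong_induction_on generalizing a with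
  | _ k ih =>
  rcases (hn hab).eq_or_lt with hconst | hjump
  · exact hasSum_indicator_jumps_of_flat hF hF' c hab
      fun s hs => le_antisymm (hconst ▸ hn hs.2.le) (hn hs.1)
  obtain ⟨τ, hτ, hjumpτ, hflat⟩ := exists_first_jump hn hrc hjump
  have hfirst := hasSum_indicator_jumps_of_flat hF hF' c hτ.1.le hflat
  have hrest := ih (n b - n τ) (by omega) hτ.2 rfl
  have hintegrable : ∀ p q : ℝ, IntervalIntegrable (fun s => F' (n s - c * s)) volume p q :=
    intervalIntegrable_comp_sub_mul (fun _ _ h => by exact_mod_cast hn h) hF' c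
  rw [← Ioc_union_Ioc_eq_Ioc hτ.1.le hτ.2,
    indicator_union_of_disjoint (Ioc_disjoint_Ioc_of_le le_rfl),
    ← intervalIntegral.integral_add_adjacent_intervals (hintegrable a τ) (hintegrable τ b)]
  convert hfirst.add hrest using 1
  ring

theorem Monotone.tsum_pow_jumps (hn : Monotone n) (hunit : ∀ s, n s ≤ leftLim n s + 1)
    (c a b : ℝ) (N : ℕ) :
    ∑' s : Ioc a b, (((n s : ℝ) - c * s) ^ N - ((leftLim n s : ℕ) - c * s) ^ N) =
      ∑ i ∈ Finset.Icc 1 N, (N.choose i : ℝ) *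
        ∑' s : Ioc a b,
          ((n s : ℝ) - (leftLim n s : ℕ)) * ((leftLim n s : ℕ) - c * s) ^ (N - i) := by
  have hjump : ∀ s : ℝ, ((n s : ℝ) - c * s) ^ N - ((leftLim n s : ℕ) - c * s) ^ N =
      ∑ i ∈ Finset.Icc 1 N, (N.choose i : ℝ) *
        (((n s : ℝ) - (leftLim n s : ℕ)) * ((leftLim n s : ℕ) - c * s) ^ (N - i)) := fun s => by
    have hle := hn.leftLim_le (le_refl s)
    rw [show (n s : ℝ) - c * s = ((leftLim n s : ℕ) - c * s) + ((n s - leftLim n s : ℕ) : ℝ) by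
      push_cast [hle]; ring, add_pow_sub_pow_of_le_one _ (by have := hunit s; omega),
      Nat.cast_sub hle, Finset.mul_sum]
    exact Finset.sum_congr rfl fun i _ => by ring
  simp_rw [hjump, ← tsum_mul_left]
  exact Summable.tsum_finsetSum fun i _ => (hn.summable_jump_mul
    (fun s => ((leftLim n s : ℕ) - c * s) ^ (N - i)) a b).mul_left (N.choose i : ℝ)

theorem pow_natCast_sub_mul_eq (hn : Monotone n) (hrc : ∀ s, ContinuousWithinAt n (Ioi s) s)
    (hunit : ∀ s, n s ≤ leftLim n s + 1) (hzero : n 0 = 0) (c : ℝ) {t : ℝ} (ht : 0 ≤ t)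
    {N : ℕ} (hN : 1 ≤ N) :
    ((n t : ℝ) - c * t) ^ N =
      (∑ i ∈ Finset.Icc 1 N, (N.choose i : ℝ) *
        ((∑' s : Ioc (0:ℝ) t,
            ((n s : ℝ) - (leftLim n s : ℕ)) * ((leftLim n s : ℕ) - c * s) ^ (N - i)) -
          c * ∫ s in (0:ℝ)..t, ((leftLim n s : ℕ) - c * s) ^ (N - i))) +
      c * ∑ i ∈ Finset.Icc 2 N, (N.choose i : ℝ) *
        ∫ s in (0:ℝ)..t, ((leftLim n s : ℕ) - c * s) ^ (N - i) := by
  have hderiv : ∀ y : ℝ, HasDerivAt (fun y => y ^ N) (N * y ^ (N - 1)) y := fun y => by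
    simpa using hasDerivAt_pow N y
  have hIto := (hasSum_indicator_jumps hn hrc hderiv (by fun_prop) c ht).tsum_eq
  rw [← tsum_subtype, hn.tsum_pow_jumps hunit, intervalIntegral.integral_const_mul,
    ← hn.integral_comp_leftLim (· ^ (N - 1)) c ht, hzero] at hIto
  rw [sum_choose_mul_sub_add_sum_choose_mul hN]
  simp only [Nat.cast_zero, mul_zero, sub_zero, zero_pow (by omega : N ≠ 0)] at hIto
  linear_combination -hIto

end CountingPath

/-- The stochastic integral `∫₀ᵗ X_{s-}^{N-i} dX_s` of the finite-variation process `X` is written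
pathwise as `Σ_{0<s≤t} ΔN_s X_{s-}^{N-i} - λ ∫₀ᵗ X_{s-}^{N-i} ds`. -/
theorem stmt11_general {Ω : Type*} [MeasurableSpace Ω] (P : Measure Ω)
    (Np : ℝ → Ω → ℕ) (lam : ℝ≥0) (hPp : IsPoissonProcess P Np lam)
    (X : ℝ → Ω → ℝ) (hX : ∀ t ω, X t ω = (Np t ω : ℝ) - lam * t)
    (Xm : ℝ → Ω → ℝ) (hXm : ∀ s ω, Xm s ω = Function.leftLim (fun u => X u ω) s)
    (ΔN : ℝ → Ω → ℝ)
    (hΔN : ∀ s ω, ΔN s ω = (Np s ω : ℝ) - Function.leftLim (fun u => (Np u ω : ℝ)) s) :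
    ∀ᵐ ω ∂P, ∀ t : ℝ, 0 ≤ t → ∀ N : ℕ, 1 ≤ N →
      (X t ω) ^ N =
        (∑ i ∈ Finset.Icc 1 N, (N.choose i : ℝ) *
          ((∑' s : Set.Ioc (0:ℝ) t, ΔN s ω * (Xm s ω) ^ (N - i)) -
            lam * ∫ s in (0:ℝ)..t, (Xm s ω) ^ (N - i))) +
        lam * ∑ i ∈ Finset.Icc 2 N, (N.choose i : ℝ) *
          ∫ s in (0:ℝ)..t, (Xm s ω) ^ (N - i) := by
  refine ae_of_all P fun ω t ht N hN => ?_
  have hn : Monotone fun s => Np s ω := fun a b hab => hPp.mono ω a b hab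
  have hleftLim : ∀ c s, leftLim (fun u => (Np u ω : ℝ) - c * u) s =
      (leftLim (fun u => Np u ω) s : ℕ) - c * s := hn.leftLim_natCast_sub_mul
  have hleftLim₀ : ∀ s, leftLim (fun u => (Np u ω : ℝ)) s = (leftLim (fun u => Np u ω) s : ℕ) :=
    fun s => by simpa using hleftLim 0 s
  have hunit : ∀ s, Np s ω ≤ leftLim (fun u => Np u ω) s + 1 := fun s => by
    have hjump := hPp.unit_jumps ω s
    rw [hleftLim₀, sub_le_iff_le_add'] at hjump
    exact_mod_cast hjump
  have hpath := pow_natCast_sub_mul_eq hn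
    (fun s => Nat.isClosedEmbedding_coe_real.isEmbedding.tendsto_nhds_iff.2 (hPp.right_cont ω s))
    hunit (hPp.start ω 0 le_rfl) lam ht hN
  simp only [hXm, hΔN, hX, hleftLim, hleftLim₀]
  exact hpath

/-- For the compensated Poisson process `X_t = N_t − λt`,
`X_t^N = Σ_{i=1}^N C(N,i) ∫₀ᵗ X_{s−}^{N−i} dX_s + λ Σ_{i=2}^N C(N,i) ∫₀ᵗ X_{s−}^{N−i} ds`
almost surely.  Since `X` has finite variation, the stochastic integral
`∫₀ᵗ X_{s−}^{N−i} dX_s` is the pathwise Lebesgue–Stieltjes integral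
`Σ_{0<s≤t} ΔN_s X_{s−}^{N−i} − λ ∫₀ᵗ X_{s−}^{N−i} ds`, which is the form used below. -/
theorem stmt11 {Ω : Type*} [MeasurableSpace Ω] (P : Measure Ω) [IsProbabilityMeasure P]
    (Np : ℝ → Ω → ℕ) (lam : ℝ≥0) (hlam : 0 < lam) (hPp : IsPoissonProcess P Np lam)
    (X : ℝ → Ω → ℝ) (hX : ∀ t ω, X t ω = (Np t ω : ℝ) - lam * t)
    (Xm : ℝ → Ω → ℝ) (hXm : ∀ s ω, Xm s ω = Function.leftLim (fun u => X u ω) s)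
    (ΔN : ℝ → Ω → ℝ)
    (hΔN : ∀ s ω, ΔN s ω = (Np s ω : ℝ) - Function.leftLim (fun u => (Np u ω : ℝ)) s) :
    ∀ᵐ ω ∂P, ∀ t : ℝ, 0 ≤ t → ∀ N : ℕ, 1 ≤ N →
      (X t ω) ^ N =
        (∑ i ∈ Finset.Icc 1 N, (N.choose i : ℝ) *
          ((∑' s : Set.Ioc (0:ℝ) t, ΔN s ω * (Xm s ω) ^ (N - i)) -
            lam * ∫ s in (0:ℝ)..t, (Xm s ω) ^ (N - i))) +
        lam * ∑ i ∈ Finset.Icc 2 N, (N.choose i : ℝ) *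
          ∫ s in (0:ℝ)..t, (Xm s ω) ^ (N - i) :=
  stmt11_general P Np lam hPp X hX Xm hXm ΔN hΔN
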